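/- arXiv:2107.13427 — 2 statements merged into one kernel-verified Lean document; each statement's English description precedes it below -/
import Mathlib

section
/- Let $H$ be a real inner product space with inner product $\langle\cdot,\cdot\rangle$ and norm $\|\cdot\|$. Let $N \ge 1$, $L \ge 0$, $K \ge 0$, $T > 0$, $\tau > 0$, and let $\tau_1,\dots,\tau_N$ be positive reals with $\tau_n \le \tau$ for all $n$ and $\sum_{n=1}^N \tau_n \le T$. Suppose $e_0, e_1, \dots, e_N \in H$ with $e_0 = 0$, and suppose that for every $1 \le n \le N$ there exist $w_n \in H$ with $\|w_n\| \le \|e_{n-1}\|$ such that $\|e_n\|^2 \le \langle w_n, e_n\rangle + L\, \tau_n\, \|w_n\|\, \|e_n\| + K\, \tau_n^2\, \|e_n\|$. Then $\|e_n\| \le K\, T\, e^{LT}\, \tau$ for all $0 \le n \le N$. (This abstract error-propagation lemma encapsulates the proof of the semidiscrete first-order error estimate: $w_n$ plays the role of $e^{\tau_n\mu A}e_{n-1}$, $L$ bounds $\|\nabla u(t_n)\|_{L^\infty}$, and $K\tau_n^2$ bounds the consistency errors $\|R_{n,1}\| + \|R_{n,2}\| + \|R_{n,3}\|$.) -/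
open scoped RealInnerProductSpace

/-- Abstract error-propagation lemma for the semidiscrete first-order error estimate:
if `e₀ = 0` and for each `1 ≤ n ≤ N` there is `wₙ` with `‖wₙ‖ ≤ ‖eₙ₋₁‖` and
`‖eₙ‖² ≤ ⟪wₙ, eₙ⟫ + L τₙ ‖wₙ‖ ‖eₙ‖ + K τₙ² ‖eₙ‖`, then `‖eₙ‖ ≤ K T e^{LT} τ`. -/
theorem semidiscrete_error_propagation
    {H : Type*} [NormedAddCommGroup H] [InnerProductSpace ℝ H]
    (N : ℕ) (hN : 1 ≤ N) (L K T τ : ℝ)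
    (hL : 0 ≤ L) (hK : 0 ≤ K) (hT : 0 < T) (hτ : 0 < τ)
    (τ' : ℕ → ℝ)
    (hτ'pos : ∀ n, 1 ≤ n → n ≤ N → 0 < τ' n)
    (hτ'le : ∀ n, 1 ≤ n → n ≤ N → τ' n ≤ τ)
    (hsum : ∑ n ∈ Finset.Icc 1 N, τ' n ≤ T)
    (e : ℕ → H) (he0 : e 0 = 0)
    (hrec : ∀ n, 1 ≤ n → n ≤ N → ∃ w : H, ‖w‖ ≤ ‖e (n - 1)‖ ∧
      ‖e n‖ ^ 2 ≤ ⟪w, e n⟫ + L * τ' n * ‖w‖ * ‖e n‖ + K * τ' n ^ 2 * ‖e n‖) :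
    ∀ n, n ≤ N → ‖e n‖ ≤ K * T * Real.exp (L * T) * τ := by
  set S : ℕ → ℝ := fun n => ∑ k ∈ Finset.Icc 1 n, τ' k with hS
  have hSnonneg : ∀ n, n ≤ N → 0 ≤ S n := by
    intro n hn
    apply Finset.sum_nonneg
    intro i hi
    simp only [Finset.mem_Icc] at hi
    exact (hτ'pos i hi.1 (hi.2.trans hn)).le
  have hSle : ∀ n, n ≤ N → S n ≤ T := by
    intro n hn
    refine le_trans ?_ hsum
    apply Finset.sum_le_sum_of_subset_of_nonneg
    · intro i hi
      simp only [Finset.mem_Icc] at *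
      exact ⟨hi.1, hi.2.trans hn⟩
    · intro i hi _
      simp only [Finset.mem_Icc] at hi
      exact (hτ'pos i hi.1 hi.2).le
  have key : ∀ n, n ≤ N → ‖e n‖ ≤ K * τ * S n * Real.exp (L * S n) := by
    intro n
    induction n with
    | zero => intro _; simp [he0, hS]
    | succ m ih =>
      intro hm
      have hm' : m ≤ N := Nat.le_of_succ_le hm
      have h1 : 1 ≤ m + 1 := Nat.le_add_left 1 m
      obtain ⟨w, hw, hineq⟩ := hrec (m + 1) h1 hm
      simp only [Nat.add_sub_cancel] at hw
      have hτp := hτ'pos (m + 1) h1 hm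
      have hτle := hτ'le (m + 1) h1 hm
      -- step bound: ‖e (m+1)‖ ≤ (1 + L * τ' (m+1)) * ‖e m‖ + K * τ' (m+1) ^ 2
      have hstep : ‖e (m + 1)‖ ≤ (1 + L * τ' (m + 1)) * ‖e m‖ + K * τ' (m + 1) ^ 2 := by
        rcases eq_or_lt_of_le (norm_nonneg (e (m + 1))) with h0 | h0
        · rw [← h0]
          have := norm_nonneg (e m)
          positivity
        · have hcs : ⟪w, e (m + 1)⟫ ≤ ‖w‖ * ‖e (m + 1)‖ := real_inner_le_norm w (e (m + 1))
          have hwnn : (0:ℝ) ≤ ‖w‖ := norm_nonneg w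
          nlinarith [hineq, mul_le_mul_of_nonneg_right hw (norm_nonneg (e (m+1))),
            mul_le_mul_of_nonneg_right (mul_le_mul_of_nonneg_left hw hL) (norm_nonneg (e (m+1)))]
      have hSm : S (m + 1) = S m + τ' (m + 1) := by
        simp only [hS]
        rw [Finset.sum_Icc_succ_top h1]
      have hexp : 1 + L * τ' (m + 1) ≤ Real.exp (L * τ' (m + 1)) := by
        have := Real.add_one_le_exp (L * τ' (m + 1))
        linarith
      have hem := ih hm'
      have hSmn := hSnonneg m hm'
      have hexpS : Real.exp (L * S (m + 1)) = Real.exp (L * S m) * Real.exp (L * τ' (m + 1)) := by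
        rw [← Real.exp_add, hSm]; ring_nf
      have hexp1 : (1:ℝ) ≤ Real.exp (L * S (m + 1)) := by
        apply Real.one_le_exp
        exact mul_nonneg hL (hSnonneg (m + 1) hm)
      calc ‖e (m + 1)‖ ≤ (1 + L * τ' (m + 1)) * ‖e m‖ + K * τ' (m + 1) ^ 2 := hstep
        _ ≤ (1 + L * τ' (m + 1)) * (K * τ * S m * Real.exp (L * S m)) + K * τ * τ' (m + 1) := by
            have h1p : (0:ℝ) ≤ 1 + L * τ' (m + 1) := by positivity
            have : K * τ' (m + 1) ^ 2 ≤ K * τ * τ' (m + 1) := by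
              nlinarith [mul_nonneg hK (mul_nonneg hτp.le (sub_nonneg.mpr hτle))]
            nlinarith [mul_le_mul_of_nonneg_left hem h1p]
        _ ≤ Real.exp (L * τ' (m + 1)) * (K * τ * S m * Real.exp (L * S m))
              + K * τ * τ' (m + 1) * Real.exp (L * S (m + 1)) := by
            have hpos : (0:ℝ) ≤ K * τ * S m * Real.exp (L * S m) := by positivity
            have h2 : K * τ * τ' (m + 1) ≤ K * τ * τ' (m + 1) * Real.exp (L * S (m + 1)) := by
              nlinarith [hexp1, mul_nonneg (mul_nonneg hK hτ.le) hτp.le]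
            nlinarith [mul_le_mul_of_nonneg_right hexp hpos]
        _ = K * τ * S (m + 1) * Real.exp (L * S (m + 1)) := by
            rw [hexpS, hSm]; ring
  intro n hn
  have h := key n hn
  have hSn := hSnonneg n hn
  have hSnT := hSle n hn
  have hexpmono : Real.exp (L * S n) ≤ Real.exp (L * T) :=
    Real.exp_le_exp.mpr (by nlinarith)
  calc ‖e n‖ ≤ K * τ * S n * Real.exp (L * S n) := h
    _ ≤ K * τ * T * Real.exp (L * T) := by
        have e1 : (0:ℝ) < Real.exp (L * S n) := Real.exp_pos _
        have := mul_le_mul (mul_le_mul_of_nonneg_left hSnT (mul_nonneg hK hτ.le))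
          hexpmono e1.le (by positivity)
        linarith
    _ = K * T * Real.exp (L * T) * τ := by ring
end

section
/- Let $H$ be a real inner product space with inner product $\langle\cdot,\cdot\rangle$ and norm $\|\cdot\|$. Let $N \ge 1$, $L \ge 0$, $K_1, K_2, K_3 \ge 0$, $T > 0$, $\tau > 0$, $h > 0$, and let $\tau_1,\dots,\tau_N$ be positive reals with $h \le \tau_n \le \tau$ for all $n$ and $\sum_{n=1}^N \tau_n \le T$. Suppose $e_0, e_1, \dots, e_N \in H$ with $e_0 = 0$, and suppose that for every $1 \le n \le N$ there exist $w_n \in H$ with $\|w_n\| \le \|e_{n-1}\|$ such that $\|e_n\|^2 \le \langle w_n, e_n\rangle + L\, \tau_n\, \|w_n\|\, \|e_n\| + \big(K_1 \tau_n^2 + K_2 \tau_n h + K_3 h^2\big) \|e_n\|$. Then $\|e_n\| \le (K_1 + K_2 + K_3)\, T\, e^{LT}\, \tau$ for all $0 \le n \le N$. (This abstract lemma encapsulates the proof of the fully discrete first-order error estimate under the mesh restriction $h \lesssim \tau_{\min}$: $w_n$ plays the role of $e^{\tau_n\mu A_h} e^h_{n-1}$, $L$ bounds the convection coefficient, and $K_1\tau_n^2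 + K_2\tau_n h + K_3 h^2$ bounds the temporal consistency errors $R_{n,1}, R_{n,2}, R_{n,3}$ together with the spatial errors $E_{n,1}, E_{n,2}, E_{n,3}$.) -/
open scoped RealInnerProductSpace

/-- Abstract error-propagation lemma for the fully discrete first-order error estimate under
the mesh restriction `h ≤ τₙ`: if `e₀ = 0` and for each `1 ≤ n ≤ N` there is `wₙ` with
`‖wₙ‖ ≤ ‖eₙ₋₁‖` and
`‖eₙ‖² ≤ ⟪wₙ, eₙ⟫ + L τₙ ‖wₙ‖ ‖eₙ‖ + (K₁ τₙ² + K₂ τₙ h + K₃ h²) ‖eₙ‖`,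
then `‖eₙ‖ ≤ (K₁ + K₂ + K₃) T e^{LT} τ`. -/
theorem fully_discrete_error_propagation
    {H : Type*} [NormedAddCommGroup H] [InnerProductSpace ℝ H]
    (N : ℕ) (hN : 1 ≤ N) (L K₁ K₂ K₃ T τ h : ℝ)
    (hL : 0 ≤ L) (hK₁ : 0 ≤ K₁) (hK₂ : 0 ≤ K₂) (hK₃ : 0 ≤ K₃)
    (hT : 0 < T) (hτ : 0 < τ) (hh : 0 < h)
    (τ' : ℕ → ℝ)
    (hτ'pos : ∀ n, 1 ≤ n → n ≤ N → 0 < τ' n)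
    (hhτ' : ∀ n, 1 ≤ n → n ≤ N → h ≤ τ' n)
    (hτ'le : ∀ n, 1 ≤ n → n ≤ N → τ' n ≤ τ)
    (hsum : ∑ n ∈ Finset.Icc 1 N, τ' n ≤ T)
    (e : ℕ → H) (he0 : e 0 = 0)
    (hrec : ∀ n, 1 ≤ n → n ≤ N → ∃ w : H, ‖w‖ ≤ ‖e (n - 1)‖ ∧
      ‖e n‖ ^ 2 ≤ ⟪w, e n⟫ + L * τ' n * ‖w‖ * ‖e n‖
        + (K₁ * τ' n ^ 2 + K₂ * τ' n * h + K₃ * h ^ 2) * ‖e n‖) :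
    ∀ n, n ≤ N → ‖e n‖ ≤ (K₁ + K₂ + K₃) * T * Real.exp (L * T) * τ := by
  set K := K₁ + K₂ + K₃ with hK
  have hK0 : 0 ≤ K := by positivity
  set S : ℕ → ℝ := fun n => ∑ k ∈ Finset.Icc 1 n, τ' k with hS
  have hST : ∀ n, n ≤ N → S n ≤ T := by
    intro n hn
    have h1 : S n ≤ S N := by
      apply Finset.sum_le_sum_of_subset_of_nonneg (Finset.Icc_subset_Icc_right hn)
      intro i hi _
      obtain ⟨hi1, hi2⟩ := Finset.mem_Icc.mp hi
      exact (hτ'pos i hi1 hi2).le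
    exact h1.trans hsum
  have hS0 : ∀ n, n ≤ N → 0 ≤ S n := by
    intro n hn
    apply Finset.sum_nonneg
    intro i hi
    obtain ⟨hi1, hi2⟩ := Finset.mem_Icc.mp hi
    exact (hτ'pos i hi1 (hi2.trans hn)).le
  have main : ∀ n, n ≤ N → ‖e n‖ ≤ K * τ * S n * Real.exp (L * S n) := by
    intro n
    induction n with
    | zero =>
      intro _
      simp [he0, hS]
    | succ m ih =>
      intro hmN
      have hm : m ≤ N := Nat.le_of_succ_le hmN
      have h1 : 1 ≤ m + 1 := Nat.succ_le_succ (Nat.zero_le m)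
      obtain ⟨w, hw, hrec'⟩ := hrec (m + 1) h1 hmN
      simp only [Nat.add_sub_cancel] at hw
      have hτp := hτ'pos (m + 1) h1 hmN
      have hτle := hτ'le (m + 1) h1 hmN
      have hhle := hhτ' (m + 1) h1 hmN
      have hCS : (⟪w, e (m + 1)⟫ : ℝ) ≤ ‖w‖ * ‖e (m + 1)‖ := real_inner_le_norm w _
      have hC : K₁ * τ' (m + 1) ^ 2 + K₂ * τ' (m + 1) * h + K₃ * h ^ 2 ≤
          K * τ' (m + 1) * τ := by
        have hhτ : h ≤ τ := hhle.trans hτle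
        have hA : τ' (m + 1) * τ' (m + 1) ≤ τ' (m + 1) * τ :=
          mul_le_mul_of_nonneg_left hτle hτp.le
        have hBm : τ' (m + 1) * h ≤ τ' (m + 1) * τ :=
          mul_le_mul_of_nonneg_left hhτ hτp.le
        have hCm : h * h ≤ τ' (m + 1) * τ := mul_le_mul hhle hhτ hh.le hτp.le
        rw [hK]
        nlinarith [mul_le_mul_of_nonneg_left hA hK₁, mul_le_mul_of_nonneg_left hBm hK₂,
          mul_le_mul_of_nonneg_left hCm hK₃]
      have hwn : 0 ≤ ‖w‖ := norm_nonneg w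
      have hen : 0 ≤ ‖e (m + 1)‖ := norm_nonneg _
      have step : ‖e (m + 1)‖ ≤ (1 + L * τ' (m + 1)) * ‖e m‖ + K * τ' (m + 1) * τ := by
        rcases eq_or_lt_of_le hen with h0 | h0
        · rw [← h0]
          have : 0 ≤ ‖e m‖ := norm_nonneg _
          nlinarith [mul_nonneg (mul_nonneg hK0 hτp.le) hτ.le, mul_nonneg hL hτp.le]
        · have key : ‖e (m + 1)‖ * ‖e (m + 1)‖ ≤
              ((1 + L * τ' (m + 1)) * ‖e m‖ + K * τ' (m + 1) * τ) * ‖e (m + 1)‖ := by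
            nlinarith [hrec', hCS, mul_le_mul_of_nonneg_right hw hen,
              mul_le_mul_of_nonneg_right hC hen,
              mul_le_mul_of_nonneg_right
                (mul_le_mul_of_nonneg_left hw (mul_nonneg hL hτp.le)) hen]
          exact le_of_mul_le_mul_right key h0
      have ihm := ih hm
      have hSrec : S (m + 1) = S m + τ' (m + 1) := by
        simp only [hS]
        rw [Finset.sum_Icc_succ_top h1]
      have hLτ0 : 0 ≤ L * τ' (m + 1) := mul_nonneg hL hτp.le
      have hLS0 : 0 ≤ L * S m := mul_nonneg hL (hS0 m hm)
      have hB : 1 + L * τ' (m + 1) ≤ Real.exp (L * τ' (m + 1)) := by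
        have := Real.add_one_le_exp (L * τ' (m + 1)); linarith
      have hA1 : 1 ≤ Real.exp (L * S m) := Real.one_le_exp hLS0
      have hB1 : 1 ≤ Real.exp (L * τ' (m + 1)) := Real.one_le_exp hLτ0
      have hEsplit : Real.exp (L * S (m + 1)) =
          Real.exp (L * S m) * Real.exp (L * τ' (m + 1)) := by
        rw [hSrec, mul_add, Real.exp_add]
      rw [hSrec, mul_add L (S m) (τ' (m + 1)), Real.exp_add]
      have hem0 : 0 ≤ ‖e m‖ := norm_nonneg _
      have hKτS : 0 ≤ K * τ * S m := mul_nonneg (mul_nonneg hK0 hτ.le) (hS0 m hm)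
      have hKττ' : 0 ≤ K * τ' (m + 1) * τ :=
        mul_nonneg (mul_nonneg hK0 hτp.le) hτ.le
      have hab1 : (1 : ℝ) ≤ Real.exp (L * S m) * Real.exp (L * τ' (m + 1)) := by
        rw [← Real.exp_add]; exact Real.one_le_exp (by linarith)
      have hb0 : (0 : ℝ) ≤ Real.exp (L * τ' (m + 1)) := (Real.exp_pos _).le
      have t1 := mul_le_mul_of_nonneg_right hB hem0
      have t2 := mul_le_mul_of_nonneg_left ihm hb0
      have t3 := le_mul_of_one_le_right hKττ' hab1
      linarith [step, t1, t2, t3]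
  intro n hn
  have h1 := main n hn
  have h2 : S n ≤ T := hST n hn
  have h3 : Real.exp (L * S n) ≤ Real.exp (L * T) :=
    Real.exp_le_exp.mpr (mul_le_mul_of_nonneg_left h2 hL)
  have h4 : K * τ * S n * Real.exp (L * S n) ≤ K * τ * T * Real.exp (L * T) := by
    have hKτ : 0 ≤ K * τ := mul_nonneg hK0 hτ.le
    have := mul_le_mul (mul_le_mul_of_nonneg_left h2 hKτ) h3
      (Real.exp_pos (L * S n)).le (by positivity)
    linarith
  calc ‖e n‖ ≤ K * τ * S n * Real.exp (L * S n) := h1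
    _ ≤ K * τ * T * Real.exp (L * T) := h4
    _ = K * T * Real.exp (L * T) * τ := by ring
end
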